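/- Assume R is an integral domain of characteristic 0 and let α, β be positive real roots. Then: (1) the element x_α is irreducible in S; (2) if α ≠ β and x ∈ S is such that x_α divides x_β · x in S, then x_α divides x. -/

import Mathlib

open scoped Classical
noncomputable section

/-- Truncation (up to degree `N` in each variable) of the double power series
`F(a,b) = Σ_{i,j} c i j • a^i b^j` of a coefficient family `c`, substituted at two
polynomials `a b` in three variables. -/
noncomputable def fglTrunc {R : Type} [CommRing R] (c : ℕ → ℕ → R) (N : ℕ)
    (a b : MvPolynomial (Fin 3) R) : MvPolynomial (Fin 3) R :=
  ∑ p ∈ Finset.range N ×ˢ Finset.range N, MvPolynomial.C (c p.1 p.2) * a ^ p.1 * b ^ p.2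

/-- A one-dimensional commutative formal group law `F(x,y) = Σ_{i,j} c i j x^i y^j`
over `R`, recorded by its coefficients.  Associativity is expressed through
arbitrarily high truncations. -/
structure FormalGroupLaw (R : Type) [CommRing R] where
  c : ℕ → ℕ → R
  c_comm : ∀ i j, c i j = c j i
  c_norm : c 1 0 = 1
  c_zero : ∀ i, i ≠ 1 → c i 0 = 0
  c_assoc : ∀ (N : ℕ) (d : Fin 3 →₀ ℕ), d 0 + d 1 + d 2 < N →
    MvPolynomial.coeff d
      (fglTrunc c N (fglTrunc c N (MvPolynomial.X 0) (MvPolynomial.X 1)) (MvPolynomial.X 2)) =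
    MvPolynomial.coeff d
      (fglTrunc c N (MvPolynomial.X 0) (fglTrunc c N (MvPolynomial.X 1) (MvPolynomial.X 2)))

/-- The whole setting of the paper: a generalized Cartan matrix together with its
root datum and Weyl group `W`, a Demazure lattice `Λ`, a one-dimensional commutative
formal group law `F` over `R`, the formal group algebra `S = R[[Λ]]_F` (presented by
its defining relations together with an `R`-algebra isomorphism with a multivariate
power series ring), the localization `Q` of `S` at the classes `x_α` of all positive
roots, the twisted group algebra `Q_W = Q ⋊ R[W]` and its action on `Q`. -/
structure DemazureSetup (R : Type) [CommRing R] : Type 1 where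
  /-- size of the generalized Cartan matrix -/
  n : ℕ
  /-- the Demazure lattice `Λ` -/
  Λ : Type
  [Λadd : AddCommGroup Λ]
  [Λfree : Module.Free ℤ Λ]
  [Λfin : Module.Finite ℤ Λ]
  /-- the Weyl group -/
  W : Type
  [Wgrp : Group W]
  [Wact : DistribMulAction W Λ]
  /-- the simple reflections -/
  s : Fin n → W
  s_sq : ∀ i, s i * s i = 1
  s_gen : Subgroup.closure (Set.range s) = ⊤
  /-- the simple roots, viewed inside the Demazure lattice -/
  sroot : Fin n → Λ
  roots_indep : LinearIndependent ℤ sroot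
  /-- pairing with the simple coroots: `scoroot i λ = ⟨λ, α_i^∨⟩ ∈ ℤ` -/
  scoroot : Fin n → (Λ →+ ℤ)
  /-- diagonal entries of the generalized Cartan matrix `a_{ii} = ⟨α_i, α_i^∨⟩ = 2` -/
  cartan_diag : ∀ i, scoroot i (sroot i) = 2
  /-- off-diagonal entries `a_{ij} = ⟨α_j, α_i^∨⟩` are nonpositive -/
  cartan_off : ∀ i j, i ≠ j → scoroot i (sroot j) ≤ 0
  cartan_zero : ∀ i j, scoroot i (sroot j) = 0 ↔ scoroot j (sroot i) = 0
  /-- the simple reflections act by `s_i(λ) = λ - ⟨λ, α_i^∨⟩ α_i` -/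
  s_act : ∀ (i : Fin n) (lam : Λ), s i • lam = lam - scoroot i lam • sroot i
  /-- `W` acts faithfully on `Λ` -/
  act_faithful : ∀ w : W, (∀ lam : Λ, w • lam = lam) → w = 1
  /-- every simple root can be extended to a `ℤ`-basis of `Λ` (Demazure lattice) -/
  basis_ext : ∀ i, ∃ (b : Module.Basis (Fin (Module.finrank ℤ Λ)) ℤ Λ) (j : Fin (Module.finrank ℤ Λ)),
    b j = sroot i
  /-- the formal group law `F` -/
  fgl : FormalGroupLaw R
  /-- the formal group algebra `S = R[[Λ]]_F` -/
  S : Type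
  [Scr : CommRing S]
  [Salg : Algebra R S]
  /-- the generators `x_λ`, `λ ∈ Λ`, of the formal group algebra -/
  x : Λ → S
  x_zero : x 0 = 0
  /-- the augmentation map `ε : S → R`, `x_λ ↦ 0` -/
  aug : S →ₐ[R] R
  aug_x : ∀ lam, aug (x lam) = 0
  /-- the defining relation `x_{λ+μ} = F(x_λ, x_μ)`, modulo every power of the
  augmentation ideal -/
  x_add : ∀ (lam mu : Λ) (N : ℕ),
    x (lam + mu) - ∑ p ∈ Finset.range N ×ˢ Finset.range N,
      algebraMap R S (fgl.c p.1 p.2) * x lam ^ p.1 * x mu ^ p.2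
    ∈ RingHom.ker aug.toRingHom ^ N
  /-- a `ℤ`-basis of `Λ` -/
  e : Module.Basis (Fin (Module.finrank ℤ Λ)) ℤ Λ
  /-- `S` is the power series ring on the `x`-classes of a basis of `Λ` -/
  ψ : S ≃ₐ[R] MvPowerSeries (Fin (Module.finrank ℤ Λ)) R
  ψ_x : ∀ j, ψ (x (e j)) = MvPowerSeries.X j
  aug_ψ : ∀ a : S, aug a = @MvPowerSeries.constantCoeff (Fin (Module.finrank ℤ Λ)) R _ (ψ a)
  /-- the `W`-action on `S` induced by `w(x_λ) = x_{w(λ)}` -/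
  [SWact : MulSemiringAction W S]
  smul_x : ∀ (w : W) (lam : Λ), w • x lam = x (w • lam)
  smul_algebraMap : ∀ (w : W) (r : R), w • (algebraMap R S r) = algebraMap R S r
  smul_IF : ∀ (w : W) (N : ℕ) (a : S),
    a ∈ RingHom.ker aug.toRingHom ^ N → w • a ∈ RingHom.ker aug.toRingHom ^ N
  /-- the localization `Q = S[1/x_α : α ∈ Φ₊]` -/
  Q : Type
  [Qcr : CommRing Q]
  [Qalg : Algebra S Q]
  loc : IsLocalization (Submonoid.closure
    (x '' {v | (∃ (w : W) (i : Fin n), v = w • sroot i) ∧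
               v ∈ (AddSubmonoid.closure (Set.range sroot) : AddSubmonoid Λ)})) Q
  /-- the induced `W`-action on `Q` -/
  [QWact : MulSemiringAction W Q]
  smul_SQ : ∀ (w : W) (a : S), w • (algebraMap S Q a) = algebraMap S Q (w • a)
  /-- the twisted group algebra `Q_W = Q ⋊_R R[W]` -/
  QW : Type
  [QWring : Ring QW]
  [QWalg : Algebra R QW]
  /-- the canonical inclusion `Q → Q_W`, `q ↦ q δ_e` -/
  ι : Q →+* QW
  /-- the canonical basis elements `δ_w` of `Q_W` -/
  δ : W →* QW
  ι_alg : ∀ r : R, ι (algebraMap S Q (algebraMap R S r)) = algebraMap R QW r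
  /-- the twisted commutation rule `δ_w · q = w(q) · δ_w` -/
  twist : ∀ (w : W) (q : Q), δ w * ι q = ι (w • q) * δ w
  /-- `Q_W` is a free left `Q`-module with basis `{δ_w}_{w ∈ W}` -/
  qw_free : ∀ z : QW, ∃! c : W →₀ Q, z = c.sum fun w q => ι q * δ w
  /-- the action of `Q_W` on `Q`, `(q δ_w) · q' = q · w(q')` -/
  act : QW → Q → Q
  act_addl : ∀ (z z' : QW) (q : Q), act (z + z') q = act z q + act z' q
  act_spec : ∀ (q : Q) (w : W) (q' : Q), act (ι q * δ w) q' = q * (w • q')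

namespace DemazureSetup

attribute [instance] Λadd Λfree Λfin Wgrp Wact Scr Salg SWact Qcr Qalg QWact QWring QWalg

variable {R : Type} [CommRing R] (D : DemazureSetup R)

/-- the set `Φ` of (real) roots -/
def roots : Set D.Λ := {v | ∃ (w : D.W) (i : Fin D.n), v = w • D.sroot i}

/-- the set `Φ₊` of positive roots -/
def posRoots : Set D.Λ :=
  {v | (∃ (w : D.W) (i : Fin D.n), v = w • D.sroot i) ∧
       v ∈ (AddSubmonoid.closure (Set.range D.sroot) : AddSubmonoid D.Λ)}

/-- the set `Φ₋ = -Φ₊` of negative roots -/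
def negRoots : Set D.Λ := {v | -v ∈ D.posRoots}

/-- the reflection `s_α ∈ W` associated to a real root `α` -/
def refl (v : D.Λ) : D.W :=
  if h : v ∈ D.roots then h.choose * D.s h.choose_spec.choose * h.choose⁻¹ else 1

/-- the product `s_{i_1} ⋯ s_{i_l}` of a word in the simple reflections -/
def wordProd (ω : List (Fin D.n)) : D.W := (ω.map D.s).prod

/-- the Coxeter length function on `W` -/
def len (w : D.W) : ℕ := sInf {l | ∃ ω : List (Fin D.n), ω.length = l ∧ D.wordProd ω = w}

/-- `ω` is a reduced word for `w` -/
def IsReduced (w : D.W) (ω : List (Fin D.n)) : Prop :=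
  D.wordProd ω = w ∧ ω.length = D.len w

/-- a choice of a reduced word `I_w` for every `w ∈ W` -/
def IsRedSystem (I : D.W → List (Fin D.n)) : Prop := ∀ w, D.IsReduced w (I w)

/-- the Bruhat order on `W` (subword characterization) -/
def bruhatLE (u w : D.W) : Prop :=
  ∃ ω ω' : List (Fin D.n), D.IsReduced w ω ∧ ω'.Sublist ω ∧ D.wordProd ω' = u

def bruhatLT (u w : D.W) : Prop := D.bruhatLE u w ∧ u ≠ w

/-- the inversion set `Φ_w = {α ∈ Φ₊ : w⁻¹(α) ∈ Φ₋}` -/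
def invSet (w : D.W) : Set D.Λ := {v | v ∈ D.posRoots ∧ w⁻¹ • v ∈ D.negRoots}

/-- the augmentation ideal `I_F = ker ε ⊂ S` -/
def IF : Ideal D.S := RingHom.ker D.aug.toRingHom

/-- the element `c_v = Π_{α ∈ Φ_v} x_α ∈ S` -/
def cElt (v : D.W) : D.S := ∏ᶠ a ∈ D.invSet v, D.x a

/-- the image of `x_λ` in the localization `Q` -/
def xQ (v : D.Λ) : D.Q := algebraMap D.S D.Q (D.x v)

/-- the image of `a ∈ S` in the twisted group algebra `Q_W` -/
def SQW (a : D.S) : D.QW := D.ι (algebraMap D.S D.Q a)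

/-- the formal Demazure element `X_α = (1/x_α)(1 - δ_{s_α}) ∈ Q_W` -/
def Xel (v : D.Λ) : D.QW := D.ι (Ring.inverse (D.xQ v)) * (1 - D.δ (D.refl v))

/-- the formal push-pull element `Y_α = 1/x_{-α} + (1/x_α) δ_{s_α} ∈ Q_W` -/
def Yel (v : D.Λ) : D.QW := D.ι (Ring.inverse (D.xQ (-v))) + D.ι (Ring.inverse (D.xQ v)) * D.δ (D.refl v)

/-- `X_i = X_{α_i}` -/
def Xi (i : Fin D.n) : D.QW := D.Xel (D.sroot i)

/-- `Y_i = Y_{α_i}` -/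
def Yi (i : Fin D.n) : D.QW := D.Yel (D.sroot i)

/-- `X_I = X_{i_1} ⋯ X_{i_l}` for a word `I = (i_1, …, i_l)` -/
def Xword (ω : List (Fin D.n)) : D.QW := (ω.map D.Xi).prod

/-- `Y_I = Y_{i_1} ⋯ Y_{i_l}` for a word `I = (i_1, …, i_l)` -/
def Yword (ω : List (Fin D.n)) : D.QW := (ω.map D.Yi).prod

/-- the formal affine Demazure algebra `D_F`: the `R`-subalgebra of `Q_W` generated
by `S` and the elements `X_α`, `α ∈ Φ` -/
def DF : Subalgebra R D.QW :=
  Algebra.adjoin R (Set.range D.SQW ∪ D.Xel '' D.roots)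

/-- `z · S ⊆ S` for `z ∈ Q_W` -/
def PreservesS (z : D.QW) : Prop :=
  ∀ a : D.S, ∃ b : D.S, D.act z (algebraMap D.S D.Q a) = algebraMap D.S D.Q b

end DemazureSetup

end

/-! Under `ψ`, `x_α` becomes a power series `f` without constant term whose linear
coefficients are the coordinates of `α` in the basis `e`; as `α = w(α_i)` and `α_i` extends to a
basis of `Λ`, these coordinates generate the unit ideal of `R`. Over the fraction field `K`, if the
coefficient of `X_j` in `f` is nonzero, every series is congruent modulo `f` to one free of `X_j`
(a formal Weierstrass division), while no nonzero multiple of `f` is free of `X_j`; hence `f` is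
prime over `K`. The division can be carried out over `R[1/n]` for every nonzero linear coefficient
`n`, so quotients by `f` in `K[[X]]` have coefficients in all these rings, hence in `R`, and `f` is
prime over `R`. Finally, if `x_α ∣ x_β`, comparing linear coefficients in characteristic `0`
gives `β = kα` with `k ∈ ℤ`; roots being primitive in `Λ`, `β = ±α`, and `-α` is not positive. -/

namespace MvPowerSeries

open Finsupp Finset.HasAntidiagonal

variable {σ A : Type*}

theorem coeff_single_one_mul [CommSemiring A] (u v : MvPowerSeries σ A) (j : σ) :
    coeff (single j 1) (u * v) =
      constantCoeff u * coeff (single j 1) v + coeff (single j 1) u * constantCoeff v := by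
  simp [coeff_mul, antidiagonal_single, Finset.Nat.antidiagonal_succ]

theorem map_injective [Semiring A] {B : Type*} [Semiring B] {φ : A →+* B}
    (hφ : Function.Injective φ) : Function.Injective (map (σ := σ) φ) :=
  fun u v huv => ext fun d => hφ (by simpa using congrArg (coeff d) huv)

section Pivot

variable [CommRing A]

def FreeOfVar (j : σ) (r : MvPowerSeries σ A) : Prop :=
  ∀ d : σ →₀ ℕ, d j ≠ 0 → coeff d r = 0

theorem FreeOfVar.mul {j : σ} {r s : MvPowerSeries σ A} (hr : FreeOfVar j r)
    (hs : FreeOfVar j s) : FreeOfVar j (r * s) := by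
  intro d hd
  refine Finset.sum_eq_zero fun p hp => ?_
  rw [mem_antidiagonal] at hp
  by_cases h₁ : p.1 j = 0
  · rw [hs p.2 fun h₂ => hd (by rw [← hp, Finsupp.add_apply, h₁, h₂]), mul_zero]
  · rw [hr p.1 h₁, zero_mul]

theorem FreeOfVar.map {B : Type*} [CommRing B] (φ : A →+* B) {j : σ} {r : MvPowerSeries σ A}
    (hr : FreeOfVar j r) : FreeOfVar j (map φ r) := fun d hd => by
  rw [coeff_map, hr d hd, map_zero]

noncomputable def pivotTail (j : σ) (d : σ →₀ ℕ) : Finset ((σ →₀ ℕ) × (σ →₀ ℕ)) :=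
  (antidiagonal (d + single j 1)).filter fun p => p.2 ≠ single j 1 ∧ p.2 ≠ 0

theorem coeff_add_single_mul {f : MvPowerSeries σ A} (hf : constantCoeff f = 0) (j : σ)
    (h : MvPowerSeries σ A) (d : σ →₀ ℕ) :
    coeff (d + single j 1) (h * f) = coeff d h * coeff (single j 1) f +
      ∑ p ∈ pivotTail j d, coeff p.1 h * coeff p.2 f := by
  have hsplit : (antidiagonal (d + single j 1)).filter
      (fun p => ¬(p.2 ≠ single j 1 ∧ p.2 ≠ 0)) = {(d, single j 1), (d + single j 1, 0)} := by
    ext ⟨p₁, p₂⟩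
    simp only [Finset.mem_filter, mem_antidiagonal, Finset.mem_insert,
      Finset.mem_singleton, Prod.mk.injEq, not_and_or, not_ne_iff]
    constructor
    · rintro ⟨hp, rfl | rfl⟩
      · exact Or.inl ⟨add_right_cancel hp, rfl⟩
      · exact Or.inr ⟨by simpa using hp, rfl⟩
    · rintro (⟨rfl, rfl⟩ | ⟨rfl, rfl⟩) <;> simp
  have hne : (d, single j 1) ≠ (d + single j 1, (0 : σ →₀ ℕ)) := by
    simp [Prod.ext_iff]
  rw [coeff_mul, ← Finset.sum_filter_not_add_sum_filter _ (fun p => p.2 ≠ single j 1 ∧ p.2 ≠ 0),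
    hsplit, Finset.sum_pair hne, coeff_zero_eq_constantCoeff_apply, hf, mul_zero, add_zero]
  rfl

theorem lex_lt_of_mem_pivotTail {j : σ} {d : σ →₀ ℕ} {p : (σ →₀ ℕ) × (σ →₀ ℕ)}
    (hp : p ∈ pivotTail j d) :
    Prod.Lex (· < ·) (· < ·) (degree p.1, degree p.1 - p.1 j) (degree d, degree d - d j) := by
  simp only [pivotTail, Finset.mem_filter, mem_antidiagonal] at hp
  obtain ⟨hp, hpj, hp0⟩ := hp
  have hdeg : degree p.1 + degree p.2 = degree d + 1 := by
    simpa using congrArg degree hp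
  have hpos : degree p.2 ≠ 0 := by rwa [Ne, degree_eq_zero_iff]
  by_cases h1 : degree p.2 = 1
  · obtain ⟨k, hk⟩ : p.2 ∈ Set.range fun k : σ => single k 1 := by
      rw [range_single_one]; exact h1
    have hkj : k ≠ j := by rintro rfl; exact hpj hk.symm
    have hj : p.1 j = d j + 1 := by
      simpa [← hk, single_apply, hkj] using DFunLike.congr_fun hp j
    have := le_degree j p.1
    exact Prod.Lex.right' _ (by omega) (by omega)
  · exact Prod.Lex.left _ _ (by omega)

/-- The quotient of `g` by `f` along `X_j`: `q_d` is read off the coefficient of `X^(d + e_j)`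
in `q * f = g`, whose other terms involve only `q_{d'}` with `d'` of smaller degree or of the
same degree and larger `X_j`-exponent. -/
noncomputable def pivotQuot (f g : MvPowerSeries σ A) (j : σ) (d : σ →₀ ℕ) : A :=
  (coeff (d + single j 1) g -
      ∑ p ∈ (pivotTail j d).attach, pivotQuot f g j p.1.1 * coeff p.1.2 f) *
    Ring.inverse (coeff (single j 1) f)
termination_by (degree d, degree d - d j)
decreasing_by exact lex_lt_of_mem_pivotTail p.2

theorem exists_eq_mul_add_freeOfVar {f : MvPowerSeries σ A} (hf : constantCoeff f = 0) {j : σ}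
    (hj : IsUnit (coeff (single j 1) f)) (g : MvPowerSeries σ A) :
    ∃ q r : MvPowerSeries σ A, g = q * f + r ∧ FreeOfVar j r := by
  let q : MvPowerSeries σ A := pivotQuot f g j
  refine ⟨q, g - q * f, by ring, fun d hd => ?_⟩
  obtain ⟨d, rfl⟩ : ∃ d', d = d' + single j 1 :=
    ⟨d - single j 1, (tsub_add_cancel_of_le (single_le_iff.2 (Nat.one_le_iff_ne_zero.2 hd))).symm⟩
  have hq : coeff d q * coeff (single j 1) f =
      coeff (d + single j 1) g - ∑ p ∈ pivotTail j d, coeff p.1 q * coeff p.2 f := by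
    change pivotQuot f g j d * _ = _
    rw [pivotQuot, mul_assoc, Ring.inverse_mul_cancel _ hj, mul_one,
      Finset.sum_attach (pivotTail j d) fun p => pivotQuot f g j p.1 * coeff p.2 f]
    rfl
  rw [map_sub, coeff_add_single_mul hf, hq, sub_add_cancel, sub_self]

theorem coeff_eq_zero_of_freeOfVar_mul [NoZeroDivisors A] {f : MvPowerSeries σ A}
    (hf : constantCoeff f = 0) {j : σ} (hj : coeff (single j 1) f ≠ 0) {h : MvPowerSeries σ A}
    (hhf : FreeOfVar j (h * f)) (d : σ →₀ ℕ) : coeff d h = 0 := by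
  have htail : ∑ p ∈ pivotTail j d, coeff p.1 h * coeff p.2 f = 0 :=
    Finset.sum_eq_zero fun p hp => by
      rw [coeff_eq_zero_of_freeOfVar_mul hf hj hhf p.1, zero_mul]
  have hd := hhf (d + single j 1) (by simp)
  rw [coeff_add_single_mul hf, htail, add_zero] at hd
  exact (mul_eq_zero.1 hd).resolve_right hj
termination_by (degree d, degree d - d j)
decreasing_by exact lex_lt_of_mem_pivotTail hp

theorem eq_zero_of_dvd_of_freeOfVar [NoZeroDivisors A] {f : MvPowerSeries σ A}
    (hf : constantCoeff f = 0) {j : σ} (hj : coeff (single j 1) f ≠ 0) {r : MvPowerSeries σ A}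
    (hfr : f ∣ r) (hr : FreeOfVar j r) : r = 0 := by
  obtain ⟨h, rfl⟩ := hfr
  have : h = 0 := ext fun d => coeff_eq_zero_of_freeOfVar_mul hf hj (by rwa [mul_comm]) d
  rw [this, mul_zero]

theorem prime_of_isUnit_coeff_single [IsDomain A] {f : MvPowerSeries σ A}
    (hf : constantCoeff f = 0) {j : σ} (hj : IsUnit (coeff (single j 1) f)) : Prime f := by
  refine ⟨fun h0 => hj.ne_zero (by rw [h0, map_zero]), fun hu => ?_, fun a b hab => ?_⟩
  · exact not_isUnit_zero (hf ▸ isUnit_iff_constantCoeff.1 hu)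
  obtain ⟨qa, ra, rfl, hra⟩ := exists_eq_mul_add_freeOfVar hf hj a
  obtain ⟨qb, rb, rfl, hrb⟩ := exists_eq_mul_add_freeOfVar hf hj b
  have hfr : f ∣ ra * rb := by
    have : ra * rb = (qa * f + ra) * (qb * f + rb) - f * (qa * (qb * f + rb) + ra * qb) := by ring
    exact this ▸ dvd_sub hab (dvd_mul_right _ _)
  rcases mul_eq_zero.1 (eq_zero_of_dvd_of_freeOfVar hf hj.ne_zero hfr (hra.mul hrb)) with h | h
  · exact Or.inl (by rw [h, add_zero]; exact dvd_mul_left _ _)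
  · exact Or.inr (by rw [h, add_zero]; exact dvd_mul_left _ _)

theorem dvd_of_map_dvd {B : Type*} [CommRing B] [IsDomain B] {φ : A →+* B}
    (hφ : Function.Injective φ) {f : MvPowerSeries σ A} (hf : constantCoeff f = 0) {j : σ}
    (hj : IsUnit (coeff (single j 1) f)) {y : MvPowerSeries σ A} (hfy : map φ f ∣ map φ y) :
    f ∣ y := by
  obtain ⟨q, r, rfl, hr⟩ := exists_eq_mul_add_freeOfVar hf hj y
  have hfB : constantCoeff (map φ f) = 0 := by rw [constantCoeff_map, hf, map_zero]
  have hjB : coeff (single j 1) (map φ f) ≠ 0 := by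
    rw [coeff_map]; exact (hj.map φ).ne_zero
  have hrB : map φ r = 0 := by
    refine eq_zero_of_dvd_of_freeOfVar hfB hjB ?_ (hr.map φ)
    rw [map_add, map_mul] at hfy
    exact (dvd_add_right (dvd_mul_left _ _)).1 hfy
  have hr0 : r = 0 := map_injective hφ (by rw [hrB, map_zero])
  rw [hr0, add_zero]
  exact dvd_mul_left _ _

end Pivot

section Descent

variable {R : Type*} [CommRing R] [IsDomain R] {K : Type*} [Field K] [Algebra R K]
  [IsFractionRing R K]

theorem exists_pow_smul_coeff_mem_of_map_dvd {f : MvPowerSeries σ R} (hf : constantCoeff f = 0)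
    {j : σ} (hj : coeff (single j 1) f ≠ 0) {y : MvPowerSeries σ R} {h : MvPowerSeries σ K}
    (hh : map (algebraMap R K) y = map (algebraMap R K) f * h) (d : σ →₀ ℕ) :
    ∃ k : ℕ, coeff (single j 1) f ^ k • coeff d h ∈ (⊥ : Subalgebra R K) := by
  -- `T = R[1/n] ⊆ K` for the pivot coefficient `n`, over which `f` has a unit pivot.
  set T := Localization.subalgebra.ofField K (Submonoid.powers (coeff (single j 1) f))
    (powers_le_nonZeroDivisors_of_noZeroDivisors hj)
  have hmap (u : MvPowerSeries σ R) :
      map (algebraMap R K) u = map (algebraMap T K) (map (algebraMap R T) u) := by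
    rw [IsScalarTower.algebraMap_eq R T K, map_comp, RingHom.comp_apply]
  obtain ⟨q, hq⟩ : map (algebraMap R T) f ∣ map (algebraMap R T) y := by
    refine dvd_of_map_dvd (φ := algebraMap T K) (j := j) Subtype.val_injective
      (by rw [constantCoeff_map, hf, map_zero]) ?_ ⟨h, by rw [← hmap, ← hmap, hh]⟩
    rw [coeff_map]
    exact IsLocalization.map_units T ⟨_, Submonoid.mem_powers _⟩
  have hfK : map (algebraMap R K) f ≠ 0 := fun h0 => hj <| IsFractionRing.injective R K <| by
    rw [← coeff_map, h0, map_zero, map_zero]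
  have hhq : h = map (algebraMap T K) q := by
    refine mul_left_cancel₀ hfK ?_
    rw [← hh, hmap, hq, map_mul, ← hmap]
  obtain ⟨a, t, ⟨k, rfl⟩, hat⟩ := (coeff d q).2
  refine ⟨k, Algebra.mem_bot.2 ⟨a, ?_⟩⟩
  have ht : algebraMap R K (coeff (single j 1) f ^ k) ≠ 0 :=
    (map_ne_zero_iff _ (IsFractionRing.injective R K)).2 (pow_ne_zero _ hj)
  rw [hhq, coeff_map, Algebra.smul_def]
  change _ = _ * ((coeff d q : T) : K)
  rw [hat, mul_comm (algebraMap R K a), mul_inv_cancel_left₀ ht]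

theorem dvd_of_map_dvd_of_span_eq_top {f : MvPowerSeries σ R} (hf : constantCoeff f = 0)
    (hspan : Ideal.span (Set.range fun i => coeff (single i 1) f) = ⊤) {y : MvPowerSeries σ R}
    (hfy : map (algebraMap R K) f ∣ map (algebraMap R K) y) : f ∣ y := by
  obtain ⟨h, hh⟩ := hfy
  have hcoeff (d : σ →₀ ℕ) : coeff d h ∈ Set.range (algebraMap R K) := by
    refine Algebra.mem_bot.1 <| Submodule.mem_of_span_eq_top_of_smul_pow_mem
      (⊥ : Subalgebra R K).toSubmodule _ hspan _ ?_
    rintro ⟨_, i, rfl⟩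
    by_cases hi : coeff (single i 1) f = 0
    · exact ⟨1, by simp [hi]⟩
    · exact exists_pow_smul_coeff_mem_of_map_dvd hf hi hh d
  choose c hc using hcoeff
  let z : MvPowerSeries σ R := c
  refine ⟨z, map_injective (IsFractionRing.injective R K) ?_⟩
  rw [hh, map_mul]
  congr 1
  exact ext fun d => (hc d).symm

theorem prime_of_span_coeff_single_eq_top {f : MvPowerSeries σ R} (hf : constantCoeff f = 0)
    (hspan : Ideal.span (Set.range fun i => coeff (single i 1) f) = ⊤) : Prime f := by
  obtain ⟨j, hj⟩ : ∃ j, coeff (single j 1) f ≠ 0 := by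
    by_contra! h0
    refine top_ne_bot (hspan.symm.trans (Ideal.span_eq_bot.2 ?_))
    rintro _ ⟨i, rfl⟩
    exact h0 i
  set Φ : MvPowerSeries σ R →+* MvPowerSeries σ (FractionRing R) := map (algebraMap R _)
  have hΦ : Prime (Φ f) := prime_of_isUnit_coeff_single (j := j)
    (by rw [constantCoeff_map, hf, map_zero])
    (by rw [coeff_map]; exact (map_ne_zero_iff _ (IsFractionRing.injective _ _)).2 hj |>.isUnit)
  refine ⟨fun h0 => hΦ.ne_zero (by rw [h0, map_zero]), fun hu => hΦ.not_isUnit (hu.map Φ),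
    fun a b hab => ?_⟩
  have hΦab : Φ f ∣ Φ a * Φ b := map_mul Φ a b ▸ map_dvd Φ hab
  rcases hΦ.dvd_or_dvd hΦab with ha | hb
  · exact Or.inl (dvd_of_map_dvd_of_span_eq_top hf hspan ha)
  · exact Or.inr (dvd_of_map_dvd_of_span_eq_top hf hspan hb)

end Descent

end MvPowerSeries

theorem LinearIndependent.eq_zero_of_mem_closure_of_neg_mem_closure {ι M : Type*} [Fintype ι]
    [AddCommGroup M] {v : ι → M} (hv : LinearIndependent ℤ v) {x : M}
    (hx : x ∈ AddSubmonoid.closure (Set.range v)) (hnx : -x ∈ AddSubmonoid.closure (Set.range v)) :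
    x = 0 := by
  obtain ⟨c, rfl⟩ := AddSubmonoid.mem_closure_range_iff_of_fintype.1 hx
  obtain ⟨d, hd⟩ := AddSubmonoid.mem_closure_range_iff_of_fintype.1 hnx
  have hsum : ∑ i, ((c i + d i : ℕ) : ℤ) • v i = 0 := by
    simp only [natCast_zsmul, add_smul, Finset.sum_add_distrib, ← hd, add_neg_cancel]
  have hc (i : ι) : c i = 0 := by
    have := Fintype.linearIndependent_iff.1 hv _ hsum i
    omega
  simp [hc]

theorem eq_or_eq_neg_of_eq_zsmul {M : Type*} [AddCommGroup M] {a b : M} (φ : M →+ ℤ)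
    (hφ : φ b = 1) {k : ℤ} (hk : b = k • a) : b = a ∨ b = -a := by
  rw [hk, map_zsmul, smul_eq_mul] at hφ
  rcases Int.eq_one_or_neg_one_of_mul_eq_one hφ with rfl | rfl
  · exact Or.inl (by rw [hk, one_smul])
  · exact Or.inr (by rw [hk, neg_one_zsmul])

namespace DemazureSetup

open MvPowerSeries Finsupp

variable {R : Type} [CommRing R] (D : DemazureSetup R)

theorem exists_addMonoidHom_eq_one_of_mem_roots {v : D.Λ} (hv : v ∈ D.roots) :
    ∃ φ : D.Λ →+ ℤ, φ v = 1 := by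
  obtain ⟨w, i, rfl⟩ := hv
  obtain ⟨b, j, hb⟩ := D.basis_ext i
  refine ⟨(b.coord j).toAddMonoidHom.comp (DistribSMul.toAddMonoidHom D.Λ w⁻¹), ?_⟩
  simp [← hb]

theorem neg_notMem_posRoots {a : D.Λ} (ha : a ∈ D.posRoots) : -a ∉ D.posRoots := fun hna => by
  obtain ⟨φ, hφ⟩ := D.exists_addMonoidHom_eq_one_of_mem_roots ha.1
  have := D.roots_indep.eq_zero_of_mem_closure_of_neg_mem_closure ha.2 hna.2
  simp [this] at hφ

theorem constantCoeff_ψ_x (v : D.Λ) : constantCoeff (D.ψ (D.x v)) = 0 := by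
  rw [← D.aug_ψ, D.aug_x]

theorem coeff_single_ψ_eq_zero_of_mem_IF_sq (j : Fin (Module.finrank ℤ D.Λ)) {z : D.S}
    (hz : z ∈ D.IF ^ 2) : coeff (single j 1) (D.ψ z) = 0 := by
  rw [sq] at hz
  refine Submodule.mul_induction_on hz (fun a ha b hb => ?_) fun u v hu hv => ?_
  · have ha : D.aug a = 0 := ha
    have hb : D.aug b = 0 := hb
    rw [map_mul, coeff_single_one_mul, ← D.aug_ψ, ← D.aug_ψ, ha, hb, zero_mul, mul_zero, add_zero]
  · rw [map_add, map_add, hu, hv, add_zero]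

theorem x_add_sub_mem_IF_sq (u v : D.Λ) : D.x (u + v) - D.x u - D.x v ∈ D.IF ^ 2 := by
  have hc01 : D.fgl.c 0 1 = 1 := D.fgl.c_comm 0 1 ▸ D.fgl.c_norm
  have hsum : ∑ p ∈ Finset.range 2 ×ˢ Finset.range 2,
      algebraMap R D.S (D.fgl.c p.1 p.2) * D.x u ^ p.1 * D.x v ^ p.2 =
      D.x u + D.x v + algebraMap R D.S (D.fgl.c 1 1) * D.x u * D.x v := by
    simp [Finset.sum_product, Finset.sum_range_succ, D.fgl.c_norm, hc01,
      D.fgl.c_zero 0 zero_ne_one]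
    ring
  have hquad : algebraMap R D.S (D.fgl.c 1 1) * D.x u * D.x v ∈ D.IF ^ 2 := by
    rw [sq]
    exact Ideal.mul_mem_mul (Ideal.mul_mem_left _ _ (D.aug_x u)) (D.aug_x v)
  have := Ideal.add_mem (D.IF ^ 2) (D.x_add u v 2) hquad
  rw [hsum] at this
  convert this using 1
  ring

theorem coeff_single_ψ_x (j : Fin (Module.finrank ℤ D.Λ)) (v : D.Λ) :
    coeff (single j 1) (D.ψ (D.x v)) = D.e.repr v j := by
  let L : D.Λ →+ R := AddMonoidHom.mk' (fun v => coeff (single j 1) (D.ψ (D.x v))) fun u v => by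
    have := D.coeff_single_ψ_eq_zero_of_mem_IF_sq j (D.x_add_sub_mem_IF_sq u v)
    simp only [map_sub] at this
    linear_combination this
  have hL : L.toIntLinearMap = (Int.castAddHom R).toIntLinearMap ∘ₗ D.e.coord j := by
    refine D.e.ext fun k => ?_
    simp [L, D.ψ_x, coeff_X, single_apply, Finsupp.single_eq_single_iff, eq_comm]
  exact LinearMap.congr_fun hL v

theorem sum_mul_coeff_single_ψ_x (φ : D.Λ →+ ℤ) (v : D.Λ) :
    ∑ j, (φ (D.e j) : R) * coeff (single j 1) (D.ψ (D.x v)) = φ v := by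
  have h := congrArg φ (D.e.sum_repr v)
  simp only [map_sum, map_zsmul, smul_eq_mul] at h
  rw [← h]
  push_cast
  simp [coeff_single_ψ_x, mul_comm]

section Domain

variable [IsDomain R]

instance : IsDomain D.S :=
  haveI := NoZeroDivisors.to_isDomain (MvPowerSeries (Fin (Module.finrank ℤ D.Λ)) R)
  MulEquiv.isDomain _ D.ψ.toMulEquiv

theorem prime_x {v : D.Λ} (hv : v ∈ D.roots) : Prime (D.x v) := by
  obtain ⟨φ, hφ⟩ := D.exists_addMonoidHom_eq_one_of_mem_roots hv
  refine (MulEquiv.prime_iff D.ψ).1 (prime_of_span_coeff_single_eq_top (D.constantCoeff_ψ_x v) ?_)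
  rw [Ideal.eq_top_iff_one, ← Int.cast_one, ← hφ, ← D.sum_mul_coeff_single_ψ_x]
  exact Ideal.sum_mem _ fun j _ => Ideal.mul_mem_left _ _ (Ideal.subset_span ⟨j, rfl⟩)

end Domain

theorem exists_eq_zsmul_of_x_dvd_x [CharZero R] {a b : D.Λ} (ha : a ∈ D.roots)
    (hab : D.x a ∣ D.x b) : ∃ k : ℤ, b = k • a := by
  obtain ⟨c, hc⟩ := hab
  obtain ⟨φ, hφ⟩ := D.exists_addMonoidHom_eq_one_of_mem_roots ha
  set r := constantCoeff (D.ψ c)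
  have hlin (j : Fin (Module.finrank ℤ D.Λ)) :
      coeff (single j 1) (D.ψ (D.x b)) = coeff (single j 1) (D.ψ (D.x a)) * r := by
    rw [hc, map_mul, coeff_single_one_mul, D.constantCoeff_ψ_x, zero_mul, zero_add]
  have hr : r = φ b := by
    rw [← D.sum_mul_coeff_single_ψ_x φ b]
    simp_rw [hlin, ← mul_assoc, ← Finset.sum_mul, D.sum_mul_coeff_single_ψ_x, hφ, Int.cast_one,
      one_mul]
  refine ⟨φ b, D.e.ext_elem fun j => ?_⟩
  have := hlin j
  rw [D.coeff_single_ψ_x, D.coeff_single_ψ_x, hr, mul_comm] at this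
  rw [map_zsmul, Finsupp.smul_apply, smul_eq_mul]
  exact_mod_cast this

theorem not_x_dvd_x [CharZero R] {a b : D.Λ} (ha : a ∈ D.posRoots) (hb : b ∈ D.posRoots)
    (hab : a ≠ b) : ¬D.x a ∣ D.x b := fun hdvd => by
  obtain ⟨k, hk⟩ := D.exists_eq_zsmul_of_x_dvd_x ha.1 hdvd
  obtain ⟨φ, hφ⟩ := D.exists_addMonoidHom_eq_one_of_mem_roots hb.1
  rcases eq_or_eq_neg_of_eq_zsmul φ hφ hk with rfl | rfl
  · exact hab rfl
  · exact D.neg_notMem_posRoots ha hb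

end DemazureSetup

/-- **Lemma 2.2**:  assume `R` is an integral domain of characteristic `0` and `α, β ∈ Φ₊`.
Then (1) `x_α` is irreducible in `S`, and (2) if `α ≠ β` and `x_α ∣ x_β · x` in `S`,
then `x_α ∣ x`. -/
theorem x_root_irreducible_and_coprime
    {R : Type} [CommRing R] [IsDomain R] [CharZero R] (D : DemazureSetup R)
    (a b : D.Λ) (ha : a ∈ D.posRoots) (hb : b ∈ D.posRoots) :
    Irreducible (D.x a) ∧
    (a ≠ b → ∀ q : D.S, D.x a ∣ D.x b * q → D.x a ∣ q) :=
  ⟨(D.prime_x ha.1).irreducible, fun hab _ hdvd =>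
    ((D.prime_x ha.1).dvd_or_dvd hdvd).resolve_left (D.not_x_dvd_x ha hb hab)⟩
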